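/- Let n ≥ 1 and let M be an n×n real matrix with strictly positive entries whose every column sums to 1. If p and q are probability vectors (nonnegative entries summing to 1) with Mp = p and Mq = q, then p = q. -/
import Mathlib


theorem stmt_5 (n : ℕ) (hn : 1 ≤ n)
    (M : Matrix (Fin n) (Fin n) ℝ) (hM : ∀ i j, 0 < M i j)
    (hMcol : ∀ j, ∑ i, M i j = 1)
    (p q : Fin n → ℝ)
    (hp : ∀ i, 0 ≤ p i) (hpsum : ∑ i, p i = 1)
    (hq : ∀ i, 0 ≤ q i) (hqsum : ∑ i, q i = 1)
    (hpstat : M.mulVec p = p) (hqstat : M.mulVec q = q) :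
    p = q := by
  by_contra hne
  set d : Fin n → ℝ := fun i => p i - q i with hd
  have hdsum : ∑ j, d j = 0 := by
    simp [hd, Finset.sum_sub_distrib, hpsum, hqsum]
  have hdstat : ∀ i, ∑ j, M i j * d j = d i := by
    intro i
    have h1 := congrFun hpstat i
    have h2 := congrFun hqstat i
    simp only [Matrix.mulVec, dotProduct] at h1 h2
    simp only [hd, mul_sub, Finset.sum_sub_distrib]
    rw [h1, h2]
  -- d is not identically zero
  have hdne : ∃ a, d a ≠ 0 := by
    by_contra h
    push_neg at h
    apply hne
    funext i
    have := h i
    simp [hd, sub_eq_zero] at this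
    exact this
  obtain ⟨a0, ha0⟩ := hdne
  -- there is a positive and a negative entry
  have hposneg : (∃ a, 0 < d a) ∧ (∃ b, d b < 0) := by
    constructor
    · by_contra h
      push_neg at h
      have : ∀ j ∈ Finset.univ, d j = 0 :=
        (Finset.sum_eq_zero_iff_of_nonpos (fun j _ => h j)).mp hdsum
      exact ha0 (this a0 (Finset.mem_univ a0))
    · by_contra h
      push_neg at h
      have : ∀ j ∈ Finset.univ, d j = 0 :=
        (Finset.sum_eq_zero_iff_of_nonneg (fun j _ => h j)).mp hdsum
      exact ha0 (this a0 (Finset.mem_univ a0))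
  obtain ⟨⟨a, hda⟩, ⟨b, hdb⟩⟩ := hposneg
  -- strict triangle inequality in each row
  have key : ∀ i, |d i| < ∑ j, M i j * |d j| := by
    intro i
    rw [abs_lt]
    constructor
    · -- -(∑ M i j |d j|) < d i  i.e. 0 < ∑ M i j (|d j| + d j)
      have h1 : (0:ℝ) < ∑ j, (M i j * |d j| + M i j * d j) := by
        apply lt_of_lt_of_le (b := M i a * |d a| + M i a * d a)
        · have := hM i a
          nlinarith [abs_of_pos hda]
        · apply Finset.single_le_sum (f := fun j => M i j * |d j| + M i j * d j)
            (fun j _ => by show (0:ℝ) ≤ M i j * |d j| + M i j * d j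
                           nlinarith [hM i j, neg_abs_le (d j)])
            (Finset.mem_univ a)
      rw [Finset.sum_add_distrib, hdstat i] at h1
      linarith
    · -- d i < ∑ M i j |d j|  i.e. 0 < ∑ M i j (|d j| - d j)
      have h1 : (0:ℝ) < ∑ j, (M i j * |d j| - M i j * d j) := by
        apply lt_of_lt_of_le (b := M i b * |d b| - M i b * d b)
        · have := hM i b
          nlinarith [abs_of_neg hdb]
        · apply Finset.single_le_sum (f := fun j => M i j * |d j| - M i j * d j)
            (fun j _ => by show (0:ℝ) ≤ M i j * |d j| - M i j * d j
                           nlinarith [hM i j, le_abs_self (d j)])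
            (Finset.mem_univ b)
      rw [Finset.sum_sub_distrib, hdstat i] at h1
      linarith
  -- sum strict inequality gives contradiction
  have hne' : (Finset.univ : Finset (Fin n)).Nonempty := by
    exact Finset.univ_nonempty_iff.mpr (Fin.pos_iff_nonempty.mp hn)
  have hsum1 : ∑ i, |d i| < ∑ i, ∑ j, M i j * |d j| :=
    Finset.sum_lt_sum_of_nonempty hne' (fun i _ => key i)
  have hsum2 : ∑ i, ∑ j, M i j * |d j| = ∑ j, |d j| := by
    rw [Finset.sum_comm]
    apply Finset.sum_congr rfl
    intro j _
    rw [← Finset.sum_mul, hMcol j, one_mul]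
  rw [hsum2] at hsum1
  exact lt_irrefl _ hsum1
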